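/- Let (α, 𝒜, μ) be a probability space and let u_1, …, u_N : α → [0,∞) be measurable umbrella bias functions with weights w_i := ∫ u_i dμ ∈ (0,∞), biased probability measures μ_i := w_i⁻¹ · (u_i · μ), and assume Σ_{k=1}^N u_k(q)/w_k > 0 for μ-almost every q. Then for every μ-integrable function G : α → ℝ, the target expectation decomposes as a sum of biased expectations: ∫ G dμ = Σ_{i=1}^N ∫ G(q) / (Σ_{j=1}^N u_j(q)/w_j) dμ_i(q). -/

import Mathlib

open MeasureTheory

/-!
With `ρᵢ := uᵢ / wᵢ` and `S := ∑ⱼ ρⱼ`, the `i`-th term is `∫ ρᵢ · G / S ∂μ`.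
Each of these integrands is dominated by `|G|` since `0 ≤ ρᵢ ≤ S`, and summing them
under the integral gives back `G` wherever `S ≠ 0`, i.e. `μ`-almost everywhere.
-/

section

variable {α : Type*} [MeasurableSpace α] {μ : Measure α}

theorem integral_withDensity_ofReal {ρ : α → ℝ} (hρ : AEMeasurable ρ μ) (hρ_nonneg : 0 ≤ᵐ[μ] ρ)
    (g : α → ℝ) :
    ∫ x, g x ∂μ.withDensity (fun x => ENNReal.ofReal (ρ x)) = ∫ x, ρ x * g x ∂μ := by
  rw [integral_withDensity_eq_integral_toReal_smul₀ hρ.ennreal_ofReal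
    (ae_of_all _ fun _ => ENNReal.ofReal_lt_top)]
  refine integral_congr_ae ?_
  filter_upwards [hρ_nonneg] with x hx
  simp [ENNReal.toReal_ofReal hx]

theorem MeasureTheory.Integrable.mul_div_of_nonneg_of_le {ρ S G : α → ℝ} (hG : Integrable G μ)
    (hρ : AEMeasurable ρ μ) (hS : AEMeasurable S μ)
    (hρS : ∀ᵐ x ∂μ, 0 ≤ ρ x ∧ ρ x ≤ S x) :
    Integrable (fun x => ρ x * (G x / S x)) μ := by
  have hbound : ∀ᵐ x ∂μ, ‖ρ x / S x‖ ≤ 1 := by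
    filter_upwards [hρS] with x ⟨h0, hle⟩
    rw [Real.norm_of_nonneg (div_nonneg h0 (h0.trans hle))]
    exact div_le_one_of_le₀ hle (h0.trans hle)
  simpa only [Pi.div_apply, div_mul_eq_mul_div, mul_div_assoc] using
    hG.bdd_mul (hρ.div hS).aestronglyMeasurable hbound

theorem integral_eq_sum_integral_div_withDensity {ι : Type*} [Fintype ι] {ρ : ι → α → ℝ}
    (hρ : ∀ i, AEMeasurable (ρ i) μ) (hρ_nonneg : ∀ i, 0 ≤ᵐ[μ] ρ i)
    (hcover : ∀ᵐ x ∂μ, 0 < ∑ i, ρ i x) {G : α → ℝ} (hG : Integrable G μ) :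
    ∫ x, G x ∂μ =
      ∑ i, ∫ x, G x / (∑ j, ρ j x) ∂μ.withDensity (fun x => ENNReal.ofReal (ρ i x)) := by
  have hS : AEMeasurable (fun x => ∑ j, ρ j x) μ := Finset.aemeasurable_fun_sum _ fun j _ => hρ j
  have hρS : ∀ i, ∀ᵐ x ∂μ, 0 ≤ ρ i x ∧ ρ i x ≤ ∑ j, ρ j x := fun i => by
    filter_upwards [ae_all_iff.2 hρ_nonneg] with x hx
    exact ⟨hx i, Finset.single_le_sum (fun j _ => hx j) (Finset.mem_univ i)⟩
  simp_rw [integral_withDensity_ofReal (hρ _) (hρ_nonneg _)]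
  rw [← integral_finsetSum _ fun i _ => hG.mul_div_of_nonneg_of_le (hρ i) hS (hρS i)]
  refine integral_congr_ae ?_
  filter_upwards [hcover] with x hx
  rw [← Finset.sum_mul, mul_div_cancel₀ _ hx.ne']

end

theorem umbrella_expectation_decomposition_general
    {α : Type*} [MeasurableSpace α] (μ : Measure α)
    (N : ℕ) (u : Fin N → α → ℝ)
    (hu_meas : ∀ i, Measurable (u i))
    (hu_nonneg : ∀ i q, 0 ≤ u i q)
    (w : Fin N → ℝ)
    (hw_pos : ∀ i, 0 < w i)
    (μb : Fin N → Measure α)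
    (hμb : ∀ i, μb i = μ.withDensity (fun q => ENNReal.ofReal (u i q / w i)))
    (hcover : ∀ᵐ q ∂μ, 0 < ∑ k, u k q / w k)
    (G : α → ℝ) (hG : Integrable G μ) :
    ∫ q, G q ∂μ = ∑ i, ∫ q, G q / (∑ j, u j q / w j) ∂(μb i) := by
  simp_rw [hμb]
  exact integral_eq_sum_integral_div_withDensity (fun i => ((hu_meas i).div_const _).aemeasurable)
    (fun i => ae_of_all _ fun q => div_nonneg (hu_nonneg i q) (hw_pos i).le) hcover hG

/-- **Umbrella sampling reconstruction of expectations (Eq. 17).**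
For every `μ`-integrable `G : α → ℝ`,
`∫ G ∂μ = ∑ i, ∫ G q / (∑ j, u j q / w j) ∂(μb i)`. -/
theorem umbrella_expectation_decomposition
    {α : Type*} [MeasurableSpace α] (μ : Measure α) [IsProbabilityMeasure μ]
    (N : ℕ) (u : Fin N → α → ℝ)
    (hu_meas : ∀ i, Measurable (u i))
    (hu_nonneg : ∀ i q, 0 ≤ u i q)
    (hu_int : ∀ i, Integrable (u i) μ)
    (w : Fin N → ℝ) (hw : ∀ i, w i = ∫ q, u i q ∂μ)
    (hw_pos : ∀ i, 0 < w i)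
    (μb : Fin N → Measure α)
    (hμb : ∀ i, μb i = μ.withDensity (fun q => ENNReal.ofReal (u i q / w i)))
    (hcover : ∀ᵐ q ∂μ, 0 < ∑ k, u k q / w k)
    (G : α → ℝ) (hG : Integrable G μ) :
    ∫ q, G q ∂μ = ∑ i, ∫ q, G q / (∑ j, u j q / w j) ∂(μb i) :=
  umbrella_expectation_decomposition_general μ N u hu_meas hu_nonneg w hw_pos μb hμb hcover G hG
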